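/- arXiv:2402.14554 — 3 statements merged into one kernel-verified Lean document; each statement's English description precedes it below -/
import Mathlib

section
/- In a doubling metric measure space, if E and F are both μ-neighborhoods of a point x, then E ∩ F is also a μ-neighborhood of x. Consequently, the μ-neighborhoods define a topology on X finer than the metric topology. -/
open Metric MeasureTheory Set Filter Topology ENNReal NNReal

/-- A `K`-doubling metric measure space structure on a metric space `X`:
a Borel-regular outer measure `μ` with `0 < μ(B_{2r}(x)) ≤ K·μ(B_r(x)) < ∞`. -/
structure IsDoubling {X : Type*} [MetricSpace X] [MeasurableSpace X] [BorelSpace X]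
    (μ : MeasureTheory.OuterMeasure X) (K : ℝ≥0∞) : Prop where
  borel_caratheodory : ∀ B : Set X, MeasurableSet B → MeasurableSet[μ.caratheodory] B
  borel_regular : ∀ s : Set X, ∃ B : Set X, MeasurableSet B ∧ s ⊆ B ∧ μ B = μ s
  ball_pos : ∀ (x : X) (r : ℝ), 0 < r → 0 < μ (Metric.ball x r)
  ball_lt_top : ∀ (x : X) (r : ℝ), 0 < r → μ (Metric.ball x r) < ⊤
  doubling : ∀ (x : X) (r : ℝ), 0 < r → μ (Metric.ball x (2 * r)) ≤ K * μ (Metric.ball x r)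

/-- `E` is a `μ`-neighborhood of `x`: `x ∈ E` and there is a Borel set `B ⊆ E`
whose complement has density `0` at `x`. -/
def MuNhd {X : Type*} [MetricSpace X] [MeasurableSpace X]
    (μ : MeasureTheory.OuterMeasure X) (x : X) (E : Set X) : Prop :=
  x ∈ E ∧ ∃ B : Set X, MeasurableSet B ∧ B ⊆ E ∧
    Filter.Tendsto (fun r : ℝ => μ (Metric.ball x r \ B) / μ (Metric.ball x r))
      (nhdsWithin 0 (Set.Ioi 0)) (nhds 0)

section MuNhd

variable {X : Type*} [MetricSpace X] [MeasurableSpace X] {μ : OuterMeasure X} {x : X}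

theorem MuNhd.inter {E F : Set X} (hE : MuNhd μ x E) (hF : MuNhd μ x F) :
    MuNhd μ x (E ∩ F) := by
  obtain ⟨hxE, BE, hBE, hBEE, hE⟩ := hE
  obtain ⟨hxF, BF, hBF, hBFF, hF⟩ := hF
  refine ⟨⟨hxE, hxF⟩, BE ∩ BF, hBE.inter hBF, inter_subset_inter hBEE hBFF, ?_⟩
  have hle : ∀ r : ℝ, μ (ball x r \ (BE ∩ BF)) / μ (ball x r) ≤
      μ (ball x r \ BE) / μ (ball x r) + μ (ball x r \ BF) / μ (ball x r) := fun r => by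
    rw [← ENNReal.add_div, sdiff_inter]
    exact ENNReal.div_le_div_right (measure_union_le _ _) _
  exact tendsto_of_tendsto_of_tendsto_of_le_of_le tendsto_const_nhds
    (by simpa using hE.add hF) (fun _ => zero_le) hle

theorem muNhd_of_mem_nhds [OpensMeasurableSpace X] {U : Set X} (hU : U ∈ 𝓝 x) :
    MuNhd μ x U := by
  obtain ⟨ε, hε, hball⟩ := Metric.mem_nhds_iff.1 hU
  refine ⟨mem_of_mem_nhds hU, ball x ε, measurableSet_ball, hball, ?_⟩
  refine tendsto_const_nhds.congr' ?_
  filter_upwards [Ioo_mem_nhdsGT hε] with r hr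
  rw [sdiff_eq_empty.2 (ball_subset_ball hr.2.le), measure_empty, ENNReal.zero_div]

end MuNhd

theorem stmt3_general {X : Type*} [MetricSpace X]
    [MeasurableSpace X] [BorelSpace X]
    (μ : MeasureTheory.OuterMeasure X) (x : X) :
    (∀ E F : Set X, MuNhd μ x E → MuNhd μ x F → MuNhd μ x (E ∩ F)) ∧
    (∀ U : Set X, IsOpen U → x ∈ U → MuNhd μ x U) :=
  ⟨fun _ _ hE hF => hE.inter hF, fun _ hU hxU => muNhd_of_mem_nhds (hU.mem_nhds hxU)⟩

/-- the intersection of two `μ`-neighborhoods of `x` is a `μ`-neighborhood of `x`;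
moreover every metric neighborhood is a `μ`-neighborhood, so the `μ`-neighborhoods define a
topology finer than the metric topology. -/
theorem stmt3 {X : Type*} [MetricSpace X] [CompleteSpace X] [TopologicalSpace.SeparableSpace X]
    [MeasurableSpace X] [BorelSpace X]
    (μ : MeasureTheory.OuterMeasure X) (K : ℝ≥0∞) (hμ : IsDoubling μ K) (x : X) :
    (∀ E F : Set X, MuNhd μ x E → MuNhd μ x F → MuNhd μ x (E ∩ F)) ∧
    (∀ U : Set X, IsOpen U → x ∈ U → MuNhd μ x U) :=
  stmt3_general μ x
end

section
/- Let (X, ρ, μ) be a doubling metric measure space, M a complete metric space, C ⊆ X nonempty closed, and f : C → M any function. Define the extension f̃ : X → M by f̃(x) = f(x) for x ∈ C and f̃(x) = f(y) for any chosen y ∈ C with ρ(x,y) < 2·dist(x, C) when x ∉ C. Then for every x ∈ C at which f is pointwise Lipschitz (Lf f(x) < ∞), the extension satisfies Lf f̃(x) ≤ 3·Lf f(x) < ∞; in particular A_f ⊆ A_{f̃}. -/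
open Metric MeasureTheory Set Filter Topology ENNReal NNReal

/-- Pointwise upper Lipschitz constant of `f` relative to `A` at `x`:
`Lf f(x) = limsup_{y ∈ A → x} d(f y, f x)/ρ(y, x)` (valued in `ℝ≥0∞`). -/
noncomputable def Lf {X M : Type*} [MetricSpace X] [MetricSpace M]
    (A : Set X) (f : X → M) (x : X) : ℝ≥0∞ :=
  Filter.limsup (fun y => ENNReal.ofReal (dist (f y) (f x) / dist y x))
    (nhdsWithin x (A \ {x}))

/-!
At a point `y` off `C` the extension copies the value of `f` at a point `z ∈ C` with
`ρ(y, z) < 2 dist(y, C) ≤ 2 ρ(y, x)`, so `ρ(z, x) ≤ 3 ρ(y, x)`. Hence the difference quotient of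
`f̃` at `y` is at most three times that of `f` at `z`, and `z → x` inside `C` as `y → x`.
-/

lemma div_le_mul_div_of_le_mul {a d t k : ℝ} (ha : 0 ≤ a) (hd : 0 ≤ d) (ht : 0 < t)
    (htd : t ≤ k * d) : a / d ≤ k * (a / t) := by
  have hd : 0 < d := hd.lt_of_ne (by rintro rfl; linarith [mul_zero k])
  rw [mul_div_assoc', div_le_div_iff₀ hd ht]
  nlinarith

section

variable {X M : Type*} [MetricSpace X] [MetricSpace M]

lemma dist_le_add_one_mul_of_dist_le_mul_infDist {C : Set X} {x y z : X} {c : ℝ} (hx : x ∈ C)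
    (hc : 0 ≤ c) (hz : dist y z ≤ c * infDist y C) : dist z x ≤ (c + 1) * dist y x :=
  calc dist z x ≤ dist y z + dist y x := dist_triangle_left z x y
    _ ≤ c * dist y x + dist y x := by
        gcongr
        exact hz.trans (mul_le_mul_of_nonneg_left (infDist_le_dist_of_mem hx) hc)
    _ = (c + 1) * dist y x := by ring

-- The difference quotient vanishes at `y = x`, so removing `x` from `A` does not matter.
lemma Lf_eq_limsup_nhdsWithin {A : Set X} {f : X → M} {x : X} (hx : x ∈ A) :
    Lf A f x = limsup (fun y => ENNReal.ofReal (dist (f y) (f x) / dist y x)) (𝓝[A] x) := by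
  conv_rhs => rw [← insert_eq_of_mem hx, ← insert_sdiff_singleton, nhdsWithin_insert,
    limsup_sup_filter]
  have hpure : limsup (fun y => ENNReal.ofReal (dist (f y) (f x) / dist y x)) (pure x) = 0 :=
    nonpos_iff_eq_zero.mp (limsup_le_of_le (by isBoundedDefault) (by simp))
  rw [hpure, zero_max, Lf]

theorem Lf_le_mul_of_eq_comp {A B : Set X} {f g : X → M} {s : X → X} {k : ℝ≥0} {x : X}
    (hx : x ∈ A) (hsA : ∀ y, s y ∈ A) (hs : ∀ y, dist (s y) x ≤ k * dist y x)
    (hg : ∀ y, g y = f (s y)) : Lf B g x ≤ k * Lf A f x := by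
  set r : X → ℝ≥0∞ := fun y => ENNReal.ofReal (dist (f y) (f x) / dist y x)
  have hsx : s x = x := dist_le_zero.mp (by simpa using hs x)
  have hquot : ∀ y, ENNReal.ofReal (dist (g y) (g x) / dist y x) ≤ k * r (s y) := by
    intro y
    dsimp only [r]
    rw [hg, hg, hsx, ← ENNReal.ofReal_coe_nnreal, ← ENNReal.ofReal_mul k.coe_nonneg]
    refine ENNReal.ofReal_le_ofReal ?_
    rcases eq_or_ne (s y) x with h | h
    · simp [h]
    · exact div_le_mul_div_of_le_mul dist_nonneg dist_nonneg (dist_pos.2 h) (hs y)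
  have hs_tendsto : Tendsto s (𝓝[B \ {x}] x) (𝓝[A] x) := by
    refine tendsto_nhdsWithin_iff.2 ⟨?_, Eventually.of_forall hsA⟩
    refine tendsto_nhdsWithin_of_tendsto_nhds (tendsto_iff_dist_tendsto_zero.2 ?_)
    refine squeeze_zero (fun _ => dist_nonneg) hs ?_
    simpa using ((continuous_id.dist (continuous_const (y := x))).tendsto x).const_mul (k : ℝ)
  calc Lf B g x ≤ limsup (fun y => k * r (s y)) (𝓝[B \ {x}] x) :=
        limsup_le_limsup (Eventually.of_forall hquot)
    _ = k * limsup (r ∘ s) (𝓝[B \ {x}] x) := ENNReal.limsup_const_mul_of_ne_top coe_ne_top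
    _ ≤ k * limsup r (𝓝[A] x) := by gcongr; exact hs_tendsto.limsup_comp_le_limsup
    _ = k * Lf A f x := by rw [Lf_eq_limsup_nhdsWithin hx]

end

theorem stmt11_general {X M : Type*} [MetricSpace X] [MetricSpace M]
    (C : Set X)
    (f ftilde : X → M)
    (heq : ∀ x ∈ C, ftilde x = f x)
    (hext : ∀ x ∉ C, ∃ y ∈ C, dist x y < 2 * Metric.infDist x C ∧ ftilde x = f y)
    (x : X) (hx : x ∈ C) (hfin : Lf C f x < ⊤) :
    Lf Set.univ ftilde x ≤ 3 * Lf C f x ∧ Lf Set.univ ftilde x < ⊤ := by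
  have hselect : ∀ y, ∃ z ∈ C, dist z x ≤ (3 : ℝ≥0) * dist y x ∧ ftilde y = f z := by
    intro y
    by_cases hy : y ∈ C
    · exact ⟨y, hy, le_mul_of_one_le_left dist_nonneg (by norm_num), heq y hy⟩
    · obtain ⟨z, hzC, hyz, hfz⟩ := hext y hy
      have hz := dist_le_add_one_mul_of_dist_le_mul_infDist hx zero_le_two hyz.le
      exact ⟨z, hzC, by norm_num at hz ⊢; exact hz, hfz⟩
  choose s hsC hs hfs using hselect
  have hle : Lf Set.univ ftilde x ≤ 3 * Lf C f x := by
    simpa using Lf_le_mul_of_eq_comp (B := Set.univ) hx hsC hs hfs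
  exact ⟨hle, hle.trans_lt (ENNReal.mul_lt_top ofNat_lt_top hfin)⟩

/-- the near-optimal-projection extension `f̃` of a function `f` on a closed set
`C` satisfies `Lf f̃(x) ≤ 3 · Lf f(x) < ∞` at every `x ∈ C` where `f` is pointwise Lipschitz;
in particular `A_f ⊆ A_{f̃}`. -/
theorem stmt11 {X M : Type*} [MetricSpace X] [MetricSpace M] [CompleteSpace M]
    (C : Set X) (hC : IsClosed C) (hCne : C.Nonempty)
    (f ftilde : X → M)
    (heq : ∀ x ∈ C, ftilde x = f x)
    (hext : ∀ x ∉ C, ∃ y ∈ C, dist x y < 2 * Metric.infDist x C ∧ ftilde x = f y)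
    (x : X) (hx : x ∈ C) (hfin : Lf C f x < ⊤) :
    Lf Set.univ ftilde x ≤ 3 * Lf C f x ∧ Lf Set.univ ftilde x < ⊤ :=
  stmt11_general C f ftilde heq hext x hx hfin
end

section
/- Let (X, ρ, μ) be a doubling metric measure space, M a complete metric space, A ⊆ X, f : A → M, i, j ∈ ℕ, P ∈ M, and δ the constant from the fullness lemma. Define E_{ij} as the set of x ∈ A such that d(f(x), P) < i/(2j) and there exists a (δ, 3/j)-full set B_x ⊆ A at x with d(f(y), f(x)) ≤ i·ρ(y,x) for all y ∈ B_x. Then the restriction of f to E_{ij} is 6i-Lipschitz. -/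
open Metric MeasureTheory Set Filter Topology ENNReal NNReal

/-- `B` is `(δ, η)`-full at `y`. -/
def IsFull {X : Type*} [MetricSpace X] [MeasurableSpace X]
    (μ : MeasureTheory.OuterMeasure X) (δ η : ℝ) (B : Set X) (y : X) : Prop :=
  y ∈ B ∧ MeasurableSet[μ.caratheodory] B ∧
    ∀ r : ℝ, 0 < r → r < η → μ (Metric.ball y r \ B) ≤ ENNReal.ofReal δ * μ (Metric.ball y r)

/-- The set `E_{ij}` of points `x ∈ A` with `d(f x, P) < i/(2j)` admitting a `(δ, 3/j)`-full
set `B_x ⊆ A` at `x` on which `f` is `i`-Lipschitz towards `x`. -/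
def Eset {X M : Type*} [MetricSpace X] [MeasurableSpace X] [MetricSpace M]
    (μ : MeasureTheory.OuterMeasure X) (A : Set X) (f : X → M) (P : M)
    (i j : ℕ) (δ : ℝ) : Set X :=
  {x ∈ A | dist (f x) P < (i : ℝ) / (2 * (j : ℝ)) ∧
    ∃ Bx : Set X, Bx ⊆ A ∧ IsFull μ δ ((3 : ℝ) / (j : ℝ)) Bx x ∧
      ∀ y ∈ Bx, dist (f y) (f x) ≤ (i : ℝ) * dist y x}

/-- with `δ` the constant from the fullness-intersection lemma, the restriction
of `f` to `E_{ij}` is `6i`-Lipschitz. -/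
theorem stmt12 {X M : Type*} [MetricSpace X] [CompleteSpace X]
    [TopologicalSpace.SeparableSpace X] [MeasurableSpace X] [BorelSpace X]
    [MetricSpace M] [CompleteSpace M]
    (μ : MeasureTheory.OuterMeasure X) (K : ℝ≥0∞) (hμ : IsDoubling μ K)
    (A : Set X) (f : X → M) (P : M) (i j : ℕ) (hi : 0 < i) (hj : 0 < j)
    (δ : ℝ) (hδ : 0 < δ)
    (hfull : ∀ (x y : X) (Bx By : Set X) (η : ℝ), 0 < η →
      IsFull μ δ η Bx x → IsFull μ δ η By y →
      0 < dist x y → dist x y < η / 3 →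
      0 < μ (Metric.ball x (3 * dist x y) ∩ Bx ∩ (Metric.ball y (3 * dist x y) ∩ By))) :
    ∀ x ∈ Eset μ A f P i j δ, ∀ y ∈ Eset μ A f P i j δ,
      dist (f x) (f y) ≤ 6 * (i : ℝ) * dist x y := by
  rintro x ⟨hxA, hxP, Bx, hBxA, hBxfull, hBxlip⟩ y ⟨hyA, hyP, By, hByA, hByfull, hBylip⟩
  have hjR : (0 : ℝ) < (j : ℝ) := by exact_mod_cast hj
  have hiR : (0 : ℝ) < (i : ℝ) := by exact_mod_cast hi
  rcases eq_or_lt_of_le (dist_nonneg (x := x) (y := y)) with h0 | hpos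
  · simp [dist_eq_zero.mp h0.symm]
  by_cases hsmall : dist x y < (1 : ℝ) / (j : ℝ)
  · -- use full intersection
    have hη : (0 : ℝ) < 3 / (j : ℝ) := by positivity
    have h3 : dist x y < (3 / (j : ℝ)) / 3 := by
      have : (3 : ℝ) / (j : ℝ) / 3 = 1 / j := by ring
      linarith
    have hμpos := hfull x y Bx By (3 / (j : ℝ)) hη hBxfull hByfull hpos h3
    have hne : (Metric.ball x (3 * dist x y) ∩ Bx ∩
        (Metric.ball y (3 * dist x y) ∩ By)).Nonempty := by
      by_contra h
      rw [Set.not_nonempty_iff_eq_empty] at h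
      rw [h] at hμpos
      simp at hμpos
    obtain ⟨z, ⟨hzx, hzBx⟩, hzy, hzBy⟩ := hne
    have h1 : dist (f z) (f x) ≤ (i : ℝ) * dist z x := hBxlip z hzBx
    have h2 : dist (f z) (f y) ≤ (i : ℝ) * dist z y := hBylip z hzBy
    have hzx' : dist z x < 3 * dist x y := Metric.mem_ball.mp hzx
    have hzy' : dist z y < 3 * dist x y := Metric.mem_ball.mp hzy
    calc dist (f x) (f y) ≤ dist (f x) (f z) + dist (f z) (f y) := dist_triangle _ _ _
    _ = dist (f z) (f x) + dist (f z) (f y) := by rw [dist_comm (f x)]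
    _ ≤ (i : ℝ) * dist z x + (i : ℝ) * dist z y := add_le_add h1 h2
    _ ≤ (i : ℝ) * (3 * dist x y) + (i : ℝ) * (3 * dist x y) := by
        gcongr
    _ = 6 * (i : ℝ) * dist x y := by ring
  · push_neg at hsmall
    have : (i : ℝ) / (2 * j) + (i : ℝ) / (2 * j) = (i : ℝ) * (1 / j) := by
      field_simp; ring
    refine le_of_lt ?_
    calc dist (f x) (f y) ≤ dist (f x) P + dist P (f y) := dist_triangle _ _ _
    _ < (i : ℝ) / (2 * j) + (i : ℝ) / (2 * j) := by
        rw [dist_comm P]; exact add_lt_add hxP hyP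
    _ = (i : ℝ) * (1 / j) := this
    _ ≤ (i : ℝ) * dist x y := by gcongr
    _ < 6 * (i : ℝ) * dist x y := by nlinarith [dist_nonneg (x := x) (y := y)]
end
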